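/- For integers p1, p2 ≥ 2 and k ≥ 2 with p3 = k p2, the Saito dual with respect to d = p1 p3 of the rational function φ(t) = (1-t^{p1})(1-t^{k})(1-t^{p1 p3})/((1-t)(1-t^{p3})(1-t^{p1 k})) is φ*(t) = ψ(t), where ψ(t) = (1-t^{p1})(1-t^{p2})(1-t^{p1 p3})/((1-t)(1-t^{p3})(1-t^{p1 p2})); that is, φ*(t)·ψ(t)^{-1} = 1. -/

import Mathlib

open RatFunc

lemma one_sub_X_pow_ne_zero (n : ℕ) (hn : 0 < n) :
    (1 - (RatFunc.X : RatFunc ℚ) ^ n) ≠ 0 := by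
  have : (1 - (RatFunc.X : RatFunc ℚ) ^ n) =
      algebraMap (Polynomial ℚ) (RatFunc ℚ) (1 - Polynomial.X ^ n) := by
    simp [RatFunc.algebraMap_X]
  rw [this]
  apply RatFunc.algebraMap_ne_zero
  intro h
  have := congrArg (Polynomial.coeff · n) h
  simp [Polynomial.coeff_one, hn.ne'] at this

theorem type_II_saito_duality (p1 p2 k : ℕ) (h1 : 2 ≤ p1) (h2 : 2 ≤ p2) (hk : 2 ≤ k) :
    let p3 : ℕ := k * p2
    let d : ℕ := p1 * p3
    let X : RatFunc ℚ := RatFunc.X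
    let phistar : RatFunc ℚ :=
      (1 - X ^ (d / p1)) ^ (-(1 : ℤ)) * (1 - X ^ (d / k)) ^ (-(1 : ℤ))
        * (1 - X ^ (d / (p1 * p3))) ^ (-(1 : ℤ)) * (1 - X ^ (d / 1)) ^ ((1 : ℤ))
        * (1 - X ^ (d / p3)) ^ ((1 : ℤ)) * (1 - X ^ (d / (p1 * k))) ^ ((1 : ℤ))
    let psi : RatFunc ℚ :=
      (1 - X ^ p1) * (1 - X ^ p2) * (1 - X ^ (p1 * p3))
        / ((1 - X) * (1 - X ^ p3) * (1 - X ^ (p1 * p2)))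
    phistar * psi⁻¹ = 1 := by
  intro p3 d X phistar psi
  have hp1 : 0 < p1 := by omega
  have hp2 : 0 < p2 := by omega
  have hk0 : 0 < k := by omega
  have e1 : d / p1 = p3 := Nat.mul_div_cancel_left _ hp1
  have e2 : d / k = p1 * p2 := by
    show p1 * (k * p2) / k = p1 * p2
    rw [show p1 * (k * p2) = k * (p1 * p2) by ring]
    exact Nat.mul_div_cancel_left _ hk0
  have e3 : d / (p1 * p3) = 1 := Nat.div_self (by positivity)
  have e4 : d / 1 = d := Nat.div_one _
  have e5 : d / p3 = p1 := Nat.mul_div_cancel _ (by positivity)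
  have e6 : d / (p1 * k) = p2 := by
    show p1 * (k * p2) / (p1 * k) = p2
    rw [show p1 * (k * p2) = (p1 * k) * p2 by ring]
    exact Nat.mul_div_cancel_left _ (by positivity)
  have n1 := one_sub_X_pow_ne_zero p1 hp1
  have n2 := one_sub_X_pow_ne_zero p2 hp2
  have n3 := one_sub_X_pow_ne_zero p3 (by positivity)
  have n4 := one_sub_X_pow_ne_zero (p1 * p3) (by positivity)
  have n5 := one_sub_X_pow_ne_zero (p1 * p2) (by positivity)
  have n6 := one_sub_X_pow_ne_zero 1 one_pos
  rw [pow_one] at n6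
  show (1 - X ^ (d / p1)) ^ (-(1 : ℤ)) * (1 - X ^ (d / k)) ^ (-(1 : ℤ))
        * (1 - X ^ (d / (p1 * p3))) ^ (-(1 : ℤ)) * (1 - X ^ (d / 1)) ^ ((1 : ℤ))
        * (1 - X ^ (d / p3)) ^ ((1 : ℤ)) * (1 - X ^ (d / (p1 * k))) ^ ((1 : ℤ)) * psi⁻¹ = 1
  rw [e1, e2, e3, e4, e5, e6]
  show _ * ((1 - X ^ p1) * (1 - X ^ p2) * (1 - X ^ (p1 * p3))
        / ((1 - X) * (1 - X ^ p3) * (1 - X ^ (p1 * p2))))⁻¹ = 1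
  rw [zpow_neg_one, zpow_one, zpow_one, zpow_one, pow_one]
  simp only [X, d]
  field_simp
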